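/- For every L ≥ 1 the following block Toeplitz identity holds: T_L(Φ, [B̃ K], −C, [−D I]) − T_L(Φ, Ẽ, C, G) · T_L(Φ₁, [B_f K_f], C₁, [D_{f,1} D₁]) = T_L(Φ₁, [B_f K_f], −C₂, [−D_{f,2} G_{f,2}]), where B_f = B̃ − ẼG⁻D, K_f = K + ẼG⁻, D_{f,1} = −G⁻D, D_{f,2} = (I − GG⁻)D, and G_{f,2} = I − GG⁻ (here [X Y] denotes horizontal block concatenation). -/

import Mathlib

/-!
Block lower-triangular Toeplitz matrices multiply as their Markov parameter sequences convolve,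
so the identity is one between Markov parameters. Since `Φ₁ = Φ + E C₁` and `B₁ = B + E D₁` arise
from the first system by injecting the second one's output through `E`, the convolution
`∑_{a+b=k} Φ^a E r_b` with the Markov parameters `r` of `(Φ₁, B₁, C₁, D₁)` telescopes to
`Φ₁^k B₁ - Φ^k B`; applying `C` and adding the feed-through term of `G` gives the claim.
-/

open Matrix

/-- Block lower-triangular Toeplitz matrix `T_L(A,B,C,D)` of the Markov parameters
of the system `(A,B,C,D)`. -/
def TL {α m p : Type*} [Fintype α] [DecidableEq α] (L : ℕ)
    (A : Matrix α α ℝ) (B : Matrix α m ℝ) (C : Matrix p α ℝ) (D : Matrix p m ℝ) :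
    Matrix (Fin L × p) (Fin L × m) ℝ :=
  Matrix.of fun ip jq =>
    if (ip.1 : ℕ) = (jq.1 : ℕ) then D ip.2 jq.2
    else if (jq.1 : ℕ) < (ip.1 : ℕ) then
      (C * A ^ ((ip.1 : ℕ) - (jq.1 : ℕ) - 1) * B) ip.2 jq.2
    else 0

open Finset

theorem Matrix.fromCols_add {R m n₁ n₂ : Type*} [Add R] (A₁ B₁ : Matrix m n₁ R)
    (A₂ B₂ : Matrix m n₂ R) : fromCols A₁ A₂ + fromCols B₁ B₂ = fromCols (A₁ + B₁) (A₂ + B₂) := by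
  ext i (j | j) <;> rfl

theorem Matrix.fromCols_sub {R m n₁ n₂ : Type*} [Sub R] (A₁ B₁ : Matrix m n₁ R)
    (A₂ B₂ : Matrix m n₂ R) : fromCols A₁ A₂ - fromCols B₁ B₂ = fromCols (A₁ - B₁) (A₂ - B₂) := by
  ext i (j | j) <;> rfl

variable {R : Type*} [Ring R] {α m p q : Type*} [Fintype α] [DecidableEq α]

def markov (A : Matrix α α R) (B : Matrix α m R) (C : Matrix p α R) (D : Matrix p m R) :
    ℕ → Matrix p m R
  | 0 => D
  | k + 1 => C * A ^ k * B

@[simp] theorem markov_zero (A : Matrix α α R) (B : Matrix α m R) (C : Matrix p α R)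
    (D : Matrix p m R) : markov A B C D 0 = D := rfl

@[simp] theorem markov_succ (A : Matrix α α R) (B : Matrix α m R) (C : Matrix p α R)
    (D : Matrix p m R) (k : ℕ) : markov A B C D (k + 1) = C * A ^ k * B := rfl

section Feedback

variable [Fintype q] {Φ Φ₁ : Matrix α α R} {E : Matrix α q R} {B B₁ : Matrix α m R}
  {C₁ : Matrix q α R} {D₁ : Matrix q m R}

theorem sum_antidiagonal_pow_mul_markov (hΦ₁ : Φ₁ = Φ + E * C₁) (hB₁ : B₁ = B + E * D₁)
    (k : ℕ) :
    ∑ x ∈ antidiagonal k, Φ ^ x.1 * E * markov Φ₁ B₁ C₁ D₁ x.2 = Φ₁ ^ k * B₁ - Φ ^ k * B := by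
  induction k with
  | zero => simp [hB₁]
  | succ k ih =>
    calc ∑ x ∈ antidiagonal (k + 1), Φ ^ x.1 * E * markov Φ₁ B₁ C₁ D₁ x.2
        = E * (C₁ * Φ₁ ^ k * B₁) +
            Φ * ∑ x ∈ antidiagonal k, Φ ^ x.1 * E * markov Φ₁ B₁ C₁ D₁ x.2 := by
          simp only [Nat.sum_antidiagonal_succ, Matrix.mul_sum, pow_succ', Matrix.mul_assoc,
            pow_zero, Matrix.one_mul, markov_succ]
      _ = Φ₁ ^ (k + 1) * B₁ - Φ ^ (k + 1) * B := by
          rw [ih, pow_succ', pow_succ', hΦ₁]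
          simp only [Matrix.mul_sub, Matrix.add_mul, Matrix.mul_assoc]
          abel

theorem markov_sub_sum_antidiagonal_markov_mul_markov {C : Matrix p α R} {G : Matrix p q R}
    (D₀ : Matrix p m R) (hΦ₁ : Φ₁ = Φ + E * C₁) (hB₁ : B₁ = B + E * D₁) (k : ℕ) :
    markov Φ B (-C) D₀ k - ∑ x ∈ antidiagonal k, markov Φ E C G x.1 * markov Φ₁ B₁ C₁ D₁ x.2 =
      markov Φ₁ B₁ (-(C + G * C₁)) (D₀ - G * D₁) k := by
  cases k with
  | zero => simp
  | succ k =>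
    have hsum : ∑ x ∈ antidiagonal (k + 1), markov Φ E C G x.1 * markov Φ₁ B₁ C₁ D₁ x.2 =
        G * (C₁ * Φ₁ ^ k * B₁) + C * (Φ₁ ^ k * B₁ - Φ ^ k * B) := by
      rw [Nat.sum_antidiagonal_succ, ← sum_antidiagonal_pow_mul_markov hΦ₁ hB₁, Matrix.mul_sum]
      simp only [markov_succ, markov_zero, Matrix.mul_assoc]
    rw [hsum]
    simp only [markov_succ, Matrix.mul_sub, Matrix.neg_mul, Matrix.add_mul, Matrix.mul_assoc]
    abel

end Feedback

def blockToeplitz (L : ℕ) (f : ℕ → Matrix p m R) : Matrix (Fin L × p) (Fin L × m) R :=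
  of fun ip jq => if jq.1 ≤ ip.1 then f (ip.1 - jq.1 : ℕ) ip.2 jq.2 else 0

theorem Fin.sum_ite_between_eq_sum_antidiagonal {M : Type*} [AddCommMonoid M] {L : ℕ}
    {i j : Fin L} (hji : j ≤ i) (F : ℕ × ℕ → M) :
    ∑ l : Fin L, (if j ≤ l ∧ l ≤ i then F ((i - l : ℕ), (l - j : ℕ)) else 0) =
      ∑ x ∈ antidiagonal (i - j : ℕ), F x := by
  rw [← sum_filter]
  refine sum_bij' (fun l _ => ((i - l : ℕ), (l - j : ℕ))) (fun x hx => ⟨j + x.2, ?_⟩)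
    ?_ ?_ ?_ ?_ fun _ _ => rfl
  · have := HasAntidiagonal.mem_antidiagonal.1 hx
    omega
  all_goals
    intro x hx
    simp only [mem_filter, mem_univ, true_and, HasAntidiagonal.mem_antidiagonal, Fin.le_def,
      Fin.ext_iff, Prod.ext_iff] at hx ⊢
    omega

theorem blockToeplitz_mul [Fintype q] (L : ℕ) (f : ℕ → Matrix p q R) (g : ℕ → Matrix q m R) :
    blockToeplitz L f * blockToeplitz L g =
      blockToeplitz L fun k => ∑ x ∈ antidiagonal k, f x.1 * g x.2 := by
  ext ⟨i, a⟩ ⟨j, b⟩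
  simp only [blockToeplitz, mul_apply, of_apply, Fintype.sum_prod_type, ite_mul, mul_ite,
    zero_mul, mul_zero, Matrix.sum_apply]
  split_ifs with hji
  · simp only [← ite_and, ← ite_sum_zero]
    exact Fin.sum_ite_between_eq_sum_antidiagonal hji fun x => ∑ r, f x.1 a r * g x.2 r b
  · refine sum_eq_zero fun l _ => sum_eq_zero fun r _ => ?_
    split_ifs with hjl hli
    · exact absurd (hjl.trans hli) hji
    all_goals rfl

theorem blockToeplitz_sub (L : ℕ) (f g : ℕ → Matrix p m R) :
    blockToeplitz L f - blockToeplitz L g = blockToeplitz L fun k => f k - g k := by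
  ext ⟨i, a⟩ ⟨j, b⟩
  simp only [blockToeplitz, Matrix.sub_apply, of_apply]
  split_ifs <;> simp

theorem TL_eq_blockToeplitz {α : Type*} [Fintype α] [DecidableEq α] (L : ℕ) (A : Matrix α α ℝ)
    (B : Matrix α m ℝ) (C : Matrix p α ℝ) (D : Matrix p m ℝ) :
    TL L A B C D = blockToeplitz L (markov A B C D) := by
  ext ⟨i, a⟩ ⟨j, b⟩
  simp only [TL, blockToeplitz, of_apply]
  rcases lt_trichotomy (j : ℕ) i with hji | hji | hij
  · obtain ⟨k, hk⟩ : ∃ k, (i : ℕ) - j = k + 1 := ⟨i - j - 1, by omega⟩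
    simp [hji.ne', hji, hji.le, Fin.le_def, hk]
  · simp [hji, Fin.le_def]
  · simp [hij.ne, hij.not_gt, Fin.le_def, hij.not_ge]

theorem TL_sub_TL_mul_TL {α : Type*} [Fintype α] [DecidableEq α] [Fintype q] (L : ℕ)
    {Φ Φ₁ : Matrix α α ℝ} {E : Matrix α q ℝ} {B B₁ : Matrix α m ℝ} {C : Matrix p α ℝ}
    {C₁ : Matrix q α ℝ} {G : Matrix p q ℝ} {D₁ : Matrix q m ℝ} (D₀ : Matrix p m ℝ)
    (hΦ₁ : Φ₁ = Φ + E * C₁) (hB₁ : B₁ = B + E * D₁) :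
    TL L Φ B (-C) D₀ - TL L Φ E C G * TL L Φ₁ B₁ C₁ D₁ =
      TL L Φ₁ B₁ (-(C + G * C₁)) (D₀ - G * D₁) := by
  simp only [TL_eq_blockToeplitz, blockToeplitz_mul, blockToeplitz_sub]
  congr 1
  funext k
  exact markov_sub_sum_antidiagonal_markov_mul_markov D₀ hΦ₁ hB₁ k

theorem stmt14_general (n nu nf ny : ℕ)
    (Φ : Matrix (Fin n) (Fin n) ℝ) (Bt : Matrix (Fin n) (Fin nu) ℝ)
    (E : Matrix (Fin n) (Fin nf) ℝ) (K : Matrix (Fin n) (Fin ny) ℝ)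
    (C : Matrix (Fin ny) (Fin n) ℝ) (D : Matrix (Fin ny) (Fin nu) ℝ)
    (G : Matrix (Fin ny) (Fin nf) ℝ)
    (Ginv : Matrix (Fin nf) (Fin ny) ℝ)
    (Φ₁ : Matrix (Fin n) (Fin n) ℝ) (hΦ₁ : Φ₁ = Φ - E * Ginv * C)
    (C₁ : Matrix (Fin nf) (Fin n) ℝ) (hC₁ : C₁ = -(Ginv * C))
    (D₁ : Matrix (Fin nf) (Fin ny) ℝ) (hD₁ : D₁ = Ginv)
    (C₂ : Matrix (Fin ny) (Fin n) ℝ) (hC₂ : C₂ = ((1 : Matrix (Fin ny) (Fin ny) ℝ) - G * Ginv) * C)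
    (Bf : Matrix (Fin n) (Fin nu) ℝ) (hBf : Bf = Bt - E * Ginv * D)
    (Kf : Matrix (Fin n) (Fin ny) ℝ) (hKf : Kf = K + E * Ginv)
    (Df1 : Matrix (Fin nf) (Fin nu) ℝ) (hDf1 : Df1 = -(Ginv * D))
    (Df2 : Matrix (Fin ny) (Fin nu) ℝ)
    (hDf2 : Df2 = ((1 : Matrix (Fin ny) (Fin ny) ℝ) - G * Ginv) * D)
    (Gf2 : Matrix (Fin ny) (Fin ny) ℝ)
    (hGf2 : Gf2 = (1 : Matrix (Fin ny) (Fin ny) ℝ) - G * Ginv) :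
    ∀ L : ℕ, 1 ≤ L →
      TL L Φ (Matrix.fromCols Bt K) (-C)
          (Matrix.fromCols (-D) (1 : Matrix (Fin ny) (Fin ny) ℝ))
        - TL L Φ E C G *
            TL L Φ₁ (Matrix.fromCols Bf Kf) C₁ (Matrix.fromCols Df1 D₁) =
      TL L Φ₁ (Matrix.fromCols Bf Kf) (-C₂) (Matrix.fromCols (-Df2) Gf2) := by
  intro L _
  have hΦ₁' : Φ₁ = Φ + E * C₁ := by
    rw [hΦ₁, hC₁, Matrix.mul_neg, ← Matrix.mul_assoc, sub_eq_add_neg]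
  have hB : fromCols Bf Kf = fromCols Bt K + E * fromCols Df1 D₁ := by
    rw [mul_fromCols, fromCols_add, hBf, hKf, hDf1, hD₁, Matrix.mul_neg, ← Matrix.mul_assoc,
      sub_eq_add_neg]
  have hC : -C₂ = -(C + G * C₁) := by
    rw [hC₂, hC₁, Matrix.sub_mul, Matrix.one_mul, Matrix.mul_neg, Matrix.mul_assoc]
    abel
  have hD : fromCols (-Df2) Gf2 = fromCols (-D) 1 - G * fromCols Df1 D₁ := by
    rw [mul_fromCols, fromCols_sub, hDf2, hGf2, hDf1, hD₁]
    simp only [Matrix.sub_mul, Matrix.one_mul, Matrix.mul_neg, Matrix.mul_assoc]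
    congr 1
    all_goals abel
  rw [TL_sub_TL_mul_TL L _ hΦ₁' hB, hC, hD]

/-- **The Toeplitz matrix `Q_L = T_L^z − T_L^f · R_L`:**
`T_L(Φ,[B̃ K],−C,[−D I]) − T_L(Φ,Ẽ,C,G) · T_L(Φ₁,[B_f K_f],C₁,[D_{f,1} D₁])
 = T_L(Φ₁,[B_f K_f],−C₂,[−D_{f,2} G_{f,2}])`. -/
theorem stmt14 (n nu nf ny : ℕ) (hn : 0 < n) (hnu : 0 < nu) (hnf : 0 < nf) (hny : 0 < ny)
    (Φ : Matrix (Fin n) (Fin n) ℝ) (Bt : Matrix (Fin n) (Fin nu) ℝ)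
    (E : Matrix (Fin n) (Fin nf) ℝ) (K : Matrix (Fin n) (Fin ny) ℝ)
    (C : Matrix (Fin ny) (Fin n) ℝ) (D : Matrix (Fin ny) (Fin nu) ℝ)
    (G : Matrix (Fin ny) (Fin nf) ℝ)
    (Ginv : Matrix (Fin nf) (Fin ny) ℝ) (hG : Ginv * G = 1)
    (Φ₁ : Matrix (Fin n) (Fin n) ℝ) (hΦ₁ : Φ₁ = Φ - E * Ginv * C)
    (C₁ : Matrix (Fin nf) (Fin n) ℝ) (hC₁ : C₁ = -(Ginv * C))
    (D₁ : Matrix (Fin nf) (Fin ny) ℝ) (hD₁ : D₁ = Ginv)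
    (C₂ : Matrix (Fin ny) (Fin n) ℝ) (hC₂ : C₂ = ((1 : Matrix (Fin ny) (Fin ny) ℝ) - G * Ginv) * C)
    (Bf : Matrix (Fin n) (Fin nu) ℝ) (hBf : Bf = Bt - E * Ginv * D)
    (Kf : Matrix (Fin n) (Fin ny) ℝ) (hKf : Kf = K + E * Ginv)
    (Df1 : Matrix (Fin nf) (Fin nu) ℝ) (hDf1 : Df1 = -(Ginv * D))
    (Df2 : Matrix (Fin ny) (Fin nu) ℝ)
    (hDf2 : Df2 = ((1 : Matrix (Fin ny) (Fin ny) ℝ) - G * Ginv) * D)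
    (Gf2 : Matrix (Fin ny) (Fin ny) ℝ)
    (hGf2 : Gf2 = (1 : Matrix (Fin ny) (Fin ny) ℝ) - G * Ginv) :
    ∀ L : ℕ, 1 ≤ L →
      TL L Φ (Matrix.fromCols Bt K) (-C)
          (Matrix.fromCols (-D) (1 : Matrix (Fin ny) (Fin ny) ℝ))
        - TL L Φ E C G *
            TL L Φ₁ (Matrix.fromCols Bf Kf) C₁ (Matrix.fromCols Df1 D₁) =
      TL L Φ₁ (Matrix.fromCols Bf Kf) (-C₂) (Matrix.fromCols (-Df2) Gf2) :=
  stmt14_general n nu nf ny Φ Bt E K C D G Ginv Φ₁ hΦ₁ C₁ hC₁ D₁ hD₁ C₂ hC₂ Bf hBf Kf hKf Df1 hDf1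
    Df2 hDf2 Gf2 hGf2
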